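/- arXiv:2601.09167 — 2 statements merged into one kernel-verified Lean document; each statement's English description precedes it below -/
import Mathlib

section
/- Let G be a 3-regular finite simple graph, let k be a positive integer, and let H be the graph constructed from G as described. Then G has a dominating set of size at most k if and only if H has a global Roman dominating function of weight at most 2k+2. -/
/-- A Roman dominating function: labels in {0,1,2} and every vertex labelled 0 has a
neighbour labelled 2. -/
def IsRDF {V : Type*} (G : SimpleGraph V) (f : V → ℕ) : Prop :=
  (∀ v, f v ≤ 2) ∧ ∀ v, f v = 0 → ∃ w, G.Adj v w ∧ f w = 2

/-- A global Roman dominating function: an RDF for both `G` and its complement. -/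
def IsGRDF {V : Type*} (G : SimpleGraph V) (f : V → ℕ) : Prop :=
  IsRDF G f ∧ IsRDF Gᶜ f

/-- The weight of a labelling. -/
def rdfWeight {V : Type*} [Fintype V] (f : V → ℕ) : ℕ := ∑ v, f v

/-- The Roman domination number `γ_R(G)`. -/
noncomputable def romanNumber {V : Type*} [Fintype V] (G : SimpleGraph V) : ℕ :=
  sInf {k | ∃ f, IsRDF G f ∧ rdfWeight f = k}

/-- The global Roman domination number `γ_gR(G)`. -/
noncomputable def globalRomanNumber {V : Type*} [Fintype V] (G : SimpleGraph V) : ℕ :=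
  sInf {k | ∃ f, IsGRDF G f ∧ rdfWeight f = k}

/-- The adjacency relation of the graph `H` built from a (3-regular) graph `G`:
vertices are three copies `u₁,u₂,u₃` of each vertex `u` of `G` together with three
extra vertices `v1,v2,v3` (encoded as `Fin 3`).  Copies `u_i`, `w_j` (u ≠ w) are adjacent
iff `uw` is NOT an edge of `G`; copies of the same vertex are pairwise non-adjacent;
each of `v1,v2,v3` is adjacent to all copies, and `v1,v2,v3` are pairwise non-adjacent. -/
def hAdj {V : Type*} (G : SimpleGraph V) :
    ((V × Fin 3) ⊕ Fin 3) → ((V × Fin 3) ⊕ Fin 3) → Prop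
  | Sum.inl (u, _), Sum.inl (w, _) => u ≠ w ∧ ¬ G.Adj u w
  | Sum.inl _, Sum.inr _ => True
  | Sum.inr _, Sum.inl _ => True
  | Sum.inr _, Sum.inr _ => False

/-- The graph `H` constructed from `G`. -/
def HGraph {V : Type*} (G : SimpleGraph V) : SimpleGraph ((V × Fin 3) ⊕ Fin 3) where
  Adj := hAdj G
  symm := by
    constructor
    rintro (⟨u, i⟩ | i) (⟨w, j⟩ | j) h
    · exact ⟨h.1.symm, fun hadj => h.2 hadj.symm⟩
    · trivial
    · trivial
    · exact h
  loopless := by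
    constructor
    rintro (⟨u, i⟩ | i) h
    · exact h.1 rfl
    · exact h

/-! Put `2` on the first copy `u₁` of each vertex of a dominating set `S` and on `v1`: every copy
is then dominated in `H` by `v1`, and in the complement of `H` either by another copy of its own
vertex or by the first copy of a dominating neighbour. Conversely, only the extra vertices are
non-adjacent to an extra vertex in `H`, so a Roman dominating function of the complement spends at
least `2` on them; and a vertex `u` whose three copies carry weight less than `2` has a copy
labelled `0` that must be dominated, in the complement, by a copy labelled `2` of a neighbour of
`u`. The vertices whose copies carry weight at least `2` therefore form a dominating set. -/

open Finset

theorem two_le_sum_of_exists_eq_two_or_forall_ne_zero {ι : Type*} [Fintype ι]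
    (hι : 2 ≤ Fintype.card ι) {g : ι → ℕ} (h : (∃ i, g i = 2) ∨ ∀ i, g i ≠ 0) :
    2 ≤ ∑ i, g i := by
  rcases h with ⟨i, hi⟩ | hpos
  · exact hi ▸ single_le_sum (fun j _ => Nat.zero_le (g j)) (mem_univ i)
  · calc 2 ≤ (univ : Finset ι).card • 1 := by simpa using hι
      _ ≤ ∑ i, g i := card_nsmul_le_sum _ _ _ fun i _ => Nat.one_le_iff_ne_zero.mpr (hpos i)

theorem rdfWeight_sum_prod {α β γ : Type*} [Fintype α] [Fintype β] [Fintype γ]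
    (f : (α × β) ⊕ γ → ℕ) :
    rdfWeight f = ∑ a, ∑ b, f (Sum.inl (a, b)) + ∑ c, f (Sum.inr c) := by
  rw [rdfWeight, Fintype.sum_sum_type, Fintype.sum_prod_type]

namespace HGraph

variable {V : Type*} {G : SimpleGraph V}

@[simp]
theorem adj_inl_inl {u w : V} {i j : Fin 3} :
    (HGraph G).Adj (Sum.inl (u, i)) (Sum.inl (w, j)) ↔ u ≠ w ∧ ¬G.Adj u w :=
  Iff.rfl

@[simp]
theorem adj_inl_inr {p : V × Fin 3} {j : Fin 3} : (HGraph G).Adj (Sum.inl p) (Sum.inr j) :=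
  trivial

@[simp]
theorem adj_inr_inl {p : V × Fin 3} {j : Fin 3} : (HGraph G).Adj (Sum.inr j) (Sum.inl p) :=
  trivial

@[simp]
theorem not_adj_inr_inr {i j : Fin 3} : ¬(HGraph G).Adj (Sum.inr i) (Sum.inr j) :=
  id

theorem exists_eq_inr_of_compl_adj_inr {j : Fin 3} {x : (V × Fin 3) ⊕ Fin 3}
    (h : (HGraph G)ᶜ.Adj (Sum.inr j) x) : ∃ j', x = Sum.inr j' := by
  rcases x with p | j'
  · exact absurd adj_inr_inl h.2
  · exact ⟨j', rfl⟩

theorem exists_eq_inl_of_compl_adj_inl {u : V} {i : Fin 3} {x : (V × Fin 3) ⊕ Fin 3}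
    (h : (HGraph G)ᶜ.Adj (Sum.inl (u, i)) x) :
    ∃ w j, x = Sum.inl (w, j) ∧ (u = w ∨ G.Adj u w) := by
  rcases x with ⟨w, j⟩ | j
  · refine ⟨w, j, rfl, ?_⟩
    by_contra! hne
    exact h.2 ⟨hne.1, hne.2⟩
  · exact absurd adj_inl_inr h.2

def labelOfDominatingSet [DecidableEq V] (S : Finset V) : (V × Fin 3) ⊕ Fin 3 → ℕ :=
  Sum.elim (fun p => if p.1 ∈ S ∧ p.2 = 0 then 2 else 0) (fun j => if j = 0 then 2 else 0)

theorem isGRDF_labelOfDominatingSet [DecidableEq V] {S : Finset V} (hS : S.Nonempty)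
    (hdom : ∀ v ∉ S, ∃ u ∈ S, G.Adj v u) : IsGRDF (HGraph G) (labelOfDominatingSet S) := by
  have hle : ∀ x, labelOfDominatingSet S x ≤ 2 := by
    rintro (p | j) <;> simp only [labelOfDominatingSet, Sum.elim_inl, Sum.elim_inr] <;> split_ifs
      <;> omega
  obtain ⟨u₀, hu₀⟩ := hS
  refine ⟨⟨hle, ?_⟩, hle, ?_⟩
  · rintro (p | j) -
    · exact ⟨Sum.inr 0, adj_inl_inr, by simp [labelOfDominatingSet]⟩
    · exact ⟨Sum.inl (u₀, 0), adj_inr_inl, by simp [labelOfDominatingSet, hu₀]⟩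
  · rintro (⟨u, i⟩ | j) h0
    · by_cases hu : u ∈ S
      · have hi : i ≠ 0 := by rintro rfl; simp [labelOfDominatingSet, hu] at h0
        refine ⟨Sum.inl (u, 0), ?_, by simp [labelOfDominatingSet, hu]⟩
        simp [hi]
      · obtain ⟨w, hw, huw⟩ := hdom u hu
        refine ⟨Sum.inl (w, 0), ?_, by simp [labelOfDominatingSet, hw]⟩
        simp [G.ne_of_adj huw, huw]
    · have hj : j ≠ 0 := by rintro rfl; simp [labelOfDominatingSet] at h0
      exact ⟨Sum.inr 0, by simp [hj], by simp [labelOfDominatingSet]⟩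

theorem rdfWeight_labelOfDominatingSet [Fintype V] [DecidableEq V] (S : Finset V) :
    rdfWeight (labelOfDominatingSet S) = 2 * S.card + 2 := by
  rw [rdfWeight_sum_prod]
  simp [labelOfDominatingSet, Fin.sum_univ_three, Finset.sum_ite_mem, mul_comm]

theorem isGRDF_of_isEmpty [IsEmpty V] :
    IsGRDF (HGraph G) (Sum.elim (fun _ => 0) (fun _ => 1)) := by
  have hle : ∀ x, Sum.elim (fun _ : V × Fin 3 => 0) (fun _ : Fin 3 => 1) x ≤ 2 := by
    rintro (p | j) <;> simp
  have hpos : ∀ x, Sum.elim (fun _ : V × Fin 3 => 0) (fun _ : Fin 3 => 1) x ≠ 0 := by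
    rintro (⟨u, _⟩ | j)
    · exact isEmptyElim u
    · simp
  exact ⟨⟨hle, fun x hx => absurd hx (hpos x)⟩, hle, fun x hx => absurd hx (hpos x)⟩

variable {f : (V × Fin 3) ⊕ Fin 3 → ℕ}

theorem two_le_sum_inr (hf : IsRDF (HGraph G)ᶜ f) : 2 ≤ ∑ j, f (Sum.inr j) := by
  refine two_le_sum_of_exists_eq_two_or_forall_ne_zero (by simp) ?_
  by_cases hpos : ∀ j, f (Sum.inr j) ≠ 0
  · exact Or.inr hpos
  push Not at hpos
  obtain ⟨j, hj⟩ := hpos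
  obtain ⟨x, hx, hx2⟩ := hf.2 _ hj
  obtain ⟨j', rfl⟩ := exists_eq_inr_of_compl_adj_inr hx
  exact Or.inl ⟨j', hx2⟩

variable [Fintype V]

def dominatingSetOfLabel (f : (V × Fin 3) ⊕ Fin 3 → ℕ) : Finset V :=
  univ.filter fun u => (∃ j, f (Sum.inl (u, j)) = 2) ∨ ∀ j, f (Sum.inl (u, j)) ≠ 0

theorem two_mul_card_dominatingSetOfLabel_add_two_le (hf : IsRDF (HGraph G)ᶜ f) :
    2 * (dominatingSetOfLabel f).card + 2 ≤ rdfWeight f := by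
  have hcopies : ∀ u ∈ dominatingSetOfLabel f, 2 ≤ ∑ j, f (Sum.inl (u, j)) := fun u hu =>
    two_le_sum_of_exists_eq_two_or_forall_ne_zero (by simp) (mem_filter.mp hu).2
  calc 2 * (dominatingSetOfLabel f).card + 2
      ≤ ∑ u ∈ dominatingSetOfLabel f, ∑ j, f (Sum.inl (u, j)) + ∑ j, f (Sum.inr j) := by
        gcongr
        · simpa [mul_comm] using card_nsmul_le_sum _ _ _ hcopies
        · exact two_le_sum_inr hf
    _ ≤ rdfWeight f := by
        rw [rdfWeight_sum_prod]
        gcongr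
        exact subset_univ _

theorem dominatingSetOfLabel_dominates (hf : IsRDF (HGraph G)ᶜ f) :
    ∀ v ∉ dominatingSetOfLabel f, ∃ u ∈ dominatingSetOfLabel f, G.Adj v u := by
  intro v hv
  simp only [dominatingSetOfLabel, mem_filter, mem_univ, true_and, not_or, not_exists,
    not_forall, not_not] at hv
  obtain ⟨hne2, i, hi⟩ := hv
  obtain ⟨x, hx, hx2⟩ := hf.2 _ hi
  obtain ⟨w, j, rfl, rfl | hvw⟩ := exists_eq_inl_of_compl_adj_inl hx
  · exact absurd hx2 (hne2 j)
  · exact ⟨w, mem_filter.mpr ⟨mem_univ w, Or.inl ⟨j, hx2⟩⟩, hvw⟩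

end HGraph

open HGraph in
theorem HGraph_dominatingSet_iff_GRDF_general {V : Type*} [Fintype V]
    (G : SimpleGraph V)
    (k : ℕ) (hk : 0 < k) :
    (∃ S : Finset V, S.card ≤ k ∧ ∀ v ∉ S, ∃ u ∈ S, G.Adj v u) ↔
      (∃ f : ((V × Fin 3) ⊕ Fin 3) → ℕ,
        IsGRDF (HGraph G) f ∧ rdfWeight f ≤ 2 * k + 2) := by
  classical
  constructor
  · rintro ⟨S, hcard, hdom⟩
    rcases S.eq_empty_or_nonempty with rfl | hS
    · have : IsEmpty V := ⟨fun v => by simpa using hdom v (notMem_empty v)⟩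
      refine ⟨_, isGRDF_of_isEmpty, ?_⟩
      simpa [rdfWeight_sum_prod] using (by omega : 3 ≤ 2 * k + 2)
    · exact ⟨_, isGRDF_labelOfDominatingSet hS hdom, by
        rw [rdfWeight_labelOfDominatingSet]; omega⟩
  · rintro ⟨f, ⟨-, hfc⟩, hw⟩
    have := two_mul_card_dominatingSetOfLabel_add_two_le hfc
    exact ⟨_, by omega, dominatingSetOfLabel_dominates hfc⟩

/-- a 3-regular graph `G` has a dominating set of size at most `k` iff
the constructed graph `H` has a global Roman dominating function of weight at most `2k+2`. -/
theorem HGraph_dominatingSet_iff_GRDF {V : Type*} [Fintype V] [DecidableEq V]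
    (G : SimpleGraph V) [DecidableRel G.Adj]
    (hreg : ∀ v : V, G.degree v = 3)
    (k : ℕ) (hk : 0 < k) :
    (∃ S : Finset V, S.card ≤ k ∧ ∀ v ∉ S, ∃ u ∈ S, G.Adj v u) ↔
      (∃ f : ((V × Fin 3) ⊕ Fin 3) → ℕ,
        IsGRDF (HGraph G) f ∧ rdfWeight f ≤ 2 * k + 2) :=
  HGraph_dominatingSet_iff_GRDF_general G k hk
end

section
/- Let G_1 and G_2 be cographs, each containing a connected component with at least two vertices, and let G be the disjoint union of G_1 and G_2. Then γ_gR(G) = γ_R(G) = γ_R(G_1) + γ_R(G_2), and moreover γ_R of the complement of G equals γ_R of the join of the complement of G_1 with the complement of G_2. -/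
/-- A cograph: a graph with no induced path on four vertices. -/
def IsCograph {V : Type*} (G : SimpleGraph V) : Prop :=
  ¬ ∃ g : Fin 4 → V, Function.Injective g ∧
      ∀ i j : Fin 4, G.Adj (g i) (g j) ↔ ((i : ℕ) + 1 = j ∨ (j : ℕ) + 1 = i)

/-- The disjoint union of two graphs. -/
def disjUnion {α β : Type*} (G : SimpleGraph α) (H : SimpleGraph β) :
    SimpleGraph (α ⊕ β) where
  Adj a b :=
    match a, b with
    | Sum.inl u, Sum.inl v => G.Adj u v
    | Sum.inr u, Sum.inr v => H.Adj u v
    | _, _ => False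
  symm := by
    refine ⟨?_⟩
    rintro (u | u) (v | v) h
    · exact h.symm
    · exact h.elim
    · exact h.elim
    · exact h.symm
  loopless := by
    refine ⟨?_⟩
    rintro (u | u) h
    · exact G.irrefl h
    · exact H.irrefl h

/-- The join of two graphs: their disjoint union together with all edges between the
two vertex sets. -/
def join {α β : Type*} (G : SimpleGraph α) (H : SimpleGraph β) :
    SimpleGraph (α ⊕ β) where
  Adj a b :=
    match a, b with
    | Sum.inl u, Sum.inl v => G.Adj u v
    | Sum.inr u, Sum.inr v => H.Adj u v
    | _, _ => True
  symm := by
    refine ⟨?_⟩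
    rintro (u | u) (v | v) h
    · exact h.symm
    · trivial
    · trivial
    · exact h.symm
  loopless := by
    refine ⟨?_⟩
    rintro (u | u) h
    · exact G.irrefl h
    · exact H.irrefl h

/-
On a graph with an edge `uv`, a minimum RDF can be chosen to take the value `2`: an RDF
without a `2` has no `0` either, so it is constant `1`, and then relabelling `u ↦ 2`, `v ↦ 0`
keeps both the weight and the Roman condition. RDFs of a disjoint union are exactly pairs of
RDFs of the parts, so `γ_R` is additive; and if both parts carry a `2`, every vertex sees a `2`
in the other part, which is a non-neighbour, so the sum of two such minimum RDFs is global.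
-/

open SimpleGraph

section Roman

variable {V : Type*}

lemma isRDF_one (G : SimpleGraph V) : IsRDF G 1 :=
  ⟨fun _ => one_le_two, fun _ h => absurd h one_ne_zero⟩

lemma IsRDF.eq_one_of_forall_ne_two {G : SimpleGraph V} {f : V → ℕ} (hf : IsRDF G f)
    (hno2 : ∀ x, f x ≠ 2) (x : V) : f x = 1 := by
  have hx0 : f x ≠ 0 := fun h0 => by
    obtain ⟨w, -, hw⟩ := hf.2 x h0
    exact hno2 w hw
  have := hf.1 x
  have := hno2 x
  omega

def edgeLabel [DecidableEq V] (u v : V) : V → ℕ :=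
  fun x => if x = u then 2 else if x = v then 0 else 1

variable [DecidableEq V] {u v : V}

lemma isRDF_edgeLabel {G : SimpleGraph V} (huv : G.Adj u v) : IsRDF G (edgeLabel u v) := by
  refine ⟨fun x => by unfold edgeLabel; split_ifs <;> omega, fun x hx => ?_⟩
  unfold edgeLabel at hx
  split_ifs at hx with hxu hxv
  subst hxv
  exact ⟨u, huv.symm, if_pos rfl⟩

lemma rdfWeight_edgeLabel [Fintype V] (huv : u ≠ v) :
    rdfWeight (edgeLabel u v) = Fintype.card V := by
  have hpt : ∀ x, edgeLabel u v x + (if v = x then 1 else 0) = 1 + (if u = x then 1 else 0) := by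
    intro x
    unfold edgeLabel
    by_cases hxu : x = u
    · subst hxu; simp [Ne.symm huv]
    by_cases hxv : x = v
    · subst hxv; simp [huv, hxu]
    simp [hxu, hxv, Ne.symm hxu, Ne.symm hxv]
  have hsum := Finset.sum_congr rfl fun x (_ : x ∈ Finset.univ) => hpt x
  simp only [Finset.sum_add_distrib, Finset.sum_ite_eq, Finset.mem_univ, if_true,
    Finset.sum_const, Finset.card_univ, smul_eq_mul, mul_one] at hsum
  unfold rdfWeight
  omega

end Roman

section RomanNumber

variable {V : Type*} [Fintype V] (G : SimpleGraph V)

lemma romanNumber_le {f : V → ℕ} (hf : IsRDF G f) : romanNumber G ≤ rdfWeight f :=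
  Nat.sInf_le ⟨f, hf, rfl⟩

lemma globalRomanNumber_le {f : V → ℕ} (hf : IsGRDF G f) : globalRomanNumber G ≤ rdfWeight f :=
  Nat.sInf_le ⟨f, hf, rfl⟩

lemma exists_isRDF_rdfWeight_eq_romanNumber : ∃ f, IsRDF G f ∧ rdfWeight f = romanNumber G :=
  Nat.sInf_mem (⟨_, 1, isRDF_one G, rfl⟩ : {k | ∃ f, IsRDF G f ∧ rdfWeight f = k}.Nonempty)

lemma exists_isGRDF_rdfWeight_eq_globalRomanNumber :
    ∃ f, IsGRDF G f ∧ rdfWeight f = globalRomanNumber G :=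
  Nat.sInf_mem
    (⟨_, 1, ⟨isRDF_one G, isRDF_one Gᶜ⟩, rfl⟩ : {k | ∃ f, IsGRDF G f ∧ rdfWeight f = k}.Nonempty)

lemma romanNumber_le_globalRomanNumber : romanNumber G ≤ globalRomanNumber G := by
  obtain ⟨f, hf, hfw⟩ := exists_isGRDF_rdfWeight_eq_globalRomanNumber G
  exact hfw ▸ romanNumber_le G hf.1

lemma exists_isRDF_rdfWeight_eq_romanNumber_of_adj {u v : V} (huv : G.Adj u v) :
    ∃ f, IsRDF G f ∧ rdfWeight f = romanNumber G ∧ ∃ w, f w = 2 := by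
  classical
  obtain ⟨f, hf, hfw⟩ := exists_isRDF_rdfWeight_eq_romanNumber G
  by_cases h2 : ∃ w, f w = 2
  · exact ⟨f, hf, hfw, h2⟩
  push Not at h2
  have hf1 : f = 1 := funext (hf.eq_one_of_forall_ne_two h2)
  refine ⟨edgeLabel u v, isRDF_edgeLabel huv, ?_, u, if_pos rfl⟩
  rw [← hfw, hf1, rdfWeight_edgeLabel (G.ne_of_adj huv)]
  simp [rdfWeight]

end RomanNumber

lemma SimpleGraph.Reachable.exists_adj_of_ne {V : Type*} {G : SimpleGraph V} {u v : V}
    (h : G.Reachable u v) (huv : u ≠ v) : ∃ x y, G.Adj x y := by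
  obtain ⟨p⟩ := h
  cases p with
  | nil => exact absurd rfl huv
  | cons hadj _ => exact ⟨_, _, hadj⟩

section DisjUnion

variable {α β : Type*} {G₁ : SimpleGraph α} {G₂ : SimpleGraph β}

lemma isRDF_disjUnion_iff {f : α ⊕ β → ℕ} :
    IsRDF (disjUnion G₁ G₂) f ↔ IsRDF G₁ (f ∘ Sum.inl) ∧ IsRDF G₂ (f ∘ Sum.inr) := by
  constructor
  · rintro ⟨hle, hdom⟩
    refine ⟨(⟨fun x => hle _, fun x hx => ?_⟩ : IsRDF G₁ _),
      (⟨fun x => hle _, fun x hx => ?_⟩ : IsRDF G₂ _)⟩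
    · obtain ⟨w | w, hw, hw2⟩ := hdom (Sum.inl x) hx
      exacts [⟨w, hw, hw2⟩, hw.elim]
    · obtain ⟨w | w, hw, hw2⟩ := hdom (Sum.inr x) hx
      exacts [hw.elim, ⟨w, hw, hw2⟩]
  · rintro ⟨⟨hle₁, hdom₁⟩, ⟨hle₂, hdom₂⟩⟩
    refine ⟨Sum.rec hle₁ hle₂, ?_⟩
    rintro (x | x) hx
    · obtain ⟨w, hw, hw2⟩ := hdom₁ x hx
      exact ⟨Sum.inl w, hw, hw2⟩
    · obtain ⟨w, hw, hw2⟩ := hdom₂ x hx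
      exact ⟨Sum.inr w, hw, hw2⟩

lemma isRDF_compl_disjUnion_sumElim {f₁ : α → ℕ} {f₂ : β → ℕ} (hf₁ : ∀ x, f₁ x ≤ 2)
    (hf₂ : ∀ y, f₂ y ≤ 2) {a : α} {b : β} (ha : f₁ a = 2) (hb : f₂ b = 2) :
    IsRDF (disjUnion G₁ G₂)ᶜ (Sum.elim f₁ f₂) := by
  refine ⟨Sum.rec hf₁ hf₂, ?_⟩
  rintro (x | x) -
  · exact ⟨Sum.inr b, (compl_adj _ _ _).2 ⟨Sum.inl_ne_inr, id⟩, hb⟩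
  · exact ⟨Sum.inl a, (compl_adj _ _ _).2 ⟨Sum.inr_ne_inl, id⟩, ha⟩

lemma compl_disjUnion : (disjUnion G₁ G₂)ᶜ = join G₁ᶜ G₂ᶜ := by
  ext (x | x) (y | y) <;> simp [disjUnion, join, compl_adj]

variable [Fintype α] [Fintype β]

lemma rdfWeight_sum (f : α ⊕ β → ℕ) :
    rdfWeight f = rdfWeight (f ∘ Sum.inl) + rdfWeight (f ∘ Sum.inr) :=
  Fintype.sum_sum_type f

lemma romanNumber_disjUnion :
    romanNumber (disjUnion G₁ G₂) = romanNumber G₁ + romanNumber G₂ := by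
  obtain ⟨f, hf, hfw⟩ := exists_isRDF_rdfWeight_eq_romanNumber (disjUnion G₁ G₂)
  obtain ⟨f₁, hf₁, hfw₁⟩ := exists_isRDF_rdfWeight_eq_romanNumber G₁
  obtain ⟨f₂, hf₂, hfw₂⟩ := exists_isRDF_rdfWeight_eq_romanNumber G₂
  have hf' := isRDF_disjUnion_iff.1 hf
  apply le_antisymm
  · calc romanNumber (disjUnion G₁ G₂) ≤ rdfWeight (Sum.elim f₁ f₂) :=
          romanNumber_le _ (isRDF_disjUnion_iff.2 ⟨hf₁, hf₂⟩)
      _ = romanNumber G₁ + romanNumber G₂ := by rw [rdfWeight_sum, ← hfw₁, ← hfw₂]; rfl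
  · calc romanNumber G₁ + romanNumber G₂
        ≤ rdfWeight (f ∘ Sum.inl) + rdfWeight (f ∘ Sum.inr) :=
          add_le_add (romanNumber_le _ hf'.1) (romanNumber_le _ hf'.2)
      _ = romanNumber (disjUnion G₁ G₂) := by rw [← rdfWeight_sum, hfw]

lemma globalRomanNumber_disjUnion {a₁ b₁ : α} {a₂ b₂ : β} (h₁ : G₁.Adj a₁ b₁)
    (h₂ : G₂.Adj a₂ b₂) :
    globalRomanNumber (disjUnion G₁ G₂) = romanNumber (disjUnion G₁ G₂) := by
  obtain ⟨f₁, hf₁, hfw₁, a, ha⟩ := exists_isRDF_rdfWeight_eq_romanNumber_of_adj G₁ h₁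
  obtain ⟨f₂, hf₂, hfw₂, b, hb⟩ := exists_isRDF_rdfWeight_eq_romanNumber_of_adj G₂ h₂
  have hglobal : IsGRDF (disjUnion G₁ G₂) (Sum.elim f₁ f₂) :=
    ⟨isRDF_disjUnion_iff.2 ⟨hf₁, hf₂⟩, isRDF_compl_disjUnion_sumElim hf₁.1 hf₂.1 ha hb⟩
  refine le_antisymm ?_ (romanNumber_le_globalRomanNumber _)
  calc globalRomanNumber (disjUnion G₁ G₂) ≤ rdfWeight (Sum.elim f₁ f₂) :=
        globalRomanNumber_le _ hglobal
    _ = romanNumber (disjUnion G₁ G₂) := by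
        rw [romanNumber_disjUnion, rdfWeight_sum, ← hfw₁, ← hfw₂]; rfl

end DisjUnion

theorem cograph_disjUnion_romanNumbers_general {α β : Type*} [Fintype α] [Fintype β]
    (G₁ : SimpleGraph α) (G₂ : SimpleGraph β)
    (hc₁ : ∃ u v : α, u ≠ v ∧ G₁.Reachable u v)
    (hc₂ : ∃ u v : β, u ≠ v ∧ G₂.Reachable u v) :
    globalRomanNumber (disjUnion G₁ G₂) = romanNumber (disjUnion G₁ G₂) ∧
    romanNumber (disjUnion G₁ G₂) = romanNumber G₁ + romanNumber G₂ ∧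
    romanNumber ((disjUnion G₁ G₂)ᶜ) = romanNumber (join (G₁ᶜ) (G₂ᶜ)) := by
  obtain ⟨u₁, v₁, hne₁, hr₁⟩ := hc₁
  obtain ⟨u₂, v₂, hne₂, hr₂⟩ := hc₂
  obtain ⟨a₁, b₁, hadj₁⟩ := hr₁.exists_adj_of_ne hne₁
  obtain ⟨a₂, b₂, hadj₂⟩ := hr₂.exists_adj_of_ne hne₂
  exact ⟨globalRomanNumber_disjUnion hadj₁ hadj₂, romanNumber_disjUnion, by rw [compl_disjUnion]⟩

/-- if `G₁`, `G₂` are cographs each having a connected component with at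
least two vertices, and `G` is their disjoint union, then
`γ_gR(G) = γ_R(G) = γ_R(G₁) + γ_R(G₂)`, and `γ_R(Gᶜ) = γ_R(G₁ᶜ ∨ G₂ᶜ)`. -/
theorem cograph_disjUnion_romanNumbers {α β : Type*} [Fintype α] [Fintype β]
    (G₁ : SimpleGraph α) (G₂ : SimpleGraph β)
    (h₁ : IsCograph G₁) (h₂ : IsCograph G₂)
    (hc₁ : ∃ u v : α, u ≠ v ∧ G₁.Reachable u v)
    (hc₂ : ∃ u v : β, u ≠ v ∧ G₂.Reachable u v) :
    globalRomanNumber (disjUnion G₁ G₂) = romanNumber (disjUnion G₁ G₂) ∧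
    romanNumber (disjUnion G₁ G₂) = romanNumber G₁ + romanNumber G₂ ∧
    romanNumber ((disjUnion G₁ G₂)ᶜ) = romanNumber (join (G₁ᶜ) (G₂ᶜ)) :=
  cograph_disjUnion_romanNumbers_general G₁ G₂ hc₁ hc₂
end
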